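/- arXiv:2402.07636 — 2 statements merged into one kernel-verified Lean document; each statement's English description precedes it below -/
import Mathlib

section
/- Let h > 0, let f : ℝ → ℝ be continuous, and let d : C¹([-h,0],ℝ) → (-h, 0) be continuous. Then there exists φ ∈ C¹([-h,0],ℝ) with φ'(0) = f(φ(d(φ))); i.e., the solution manifold X_F of F(φ) = f(φ(d(φ))) is nonempty. -/
/-!
Take `φ = b t + a` with `b = f 0`, so that `φ'(0) = f 0` and it suffices to have
`φ(d φ) = b · d φ + a = 0`. Since `d φ ∈ (-h, 0)`, the map `a ↦ a + b · d φ` differs from the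
identity by at most `|b| h`, so the intermediate value theorem gives a zero.
-/

open Set

/-- The Banach space `C¹([-h,0],ℝ)`, modelled as the closed subspace of
`C([-h,0],ℝ) × C([-h,0],ℝ)` consisting of pairs `(φ, φ')` where the second component is the
derivative of the first within `[-h,0]`. -/
noncomputable def D1 (h : ℝ) (hh : 0 < h) :
    Submodule ℝ (C(Icc (-h) 0, ℝ) × C(Icc (-h) 0, ℝ)) where
  carrier := {p | ∀ t : Icc (-h) 0,
      HasDerivWithinAt (fun s : ℝ => p.1 (projIcc (-h) 0 (by linarith) s))
        (p.2 t) (Icc (-h) 0) (t : ℝ)}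
  add_mem' := by
    intro p q hp hq t
    first
    | exact (hp t).add (hq t)
    | simpa using (hp t).add (hq t)
  zero_mem' := by
    intro t
    simpa using hasDerivWithinAt_const (t : ℝ) (Icc (-h) 0) (0 : ℝ)
  smul_mem' := by
    intro c p hp t
    first
    | exact (hp t).const_smul c
    | simpa using (hp t).const_smul c

noncomputable instance D1.instNormedAddCommGroup (h : ℝ) (hh : 0 < h) :
    NormedAddCommGroup (D1 h hh) := by infer_instance

noncomputable instance D1.instNormedSpace (h : ℝ) (hh : 0 < h) :
    NormedSpace ℝ (D1 h hh) := by infer_instance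

theorem exists_eq_zero_of_abs_sub_le {g : ℝ → ℝ} (hg : Continuous g) {C : ℝ}
    (hC : ∀ a, |g a - a| ≤ C) : ∃ a, g a = 0 := by
  have hC₀ : 0 ≤ C := (abs_nonneg _).trans (hC 0)
  have hneg : g (-C) ≤ 0 := by linarith [(abs_le.1 (hC (-C))).2]
  have hpos : 0 ≤ g C := by linarith [(abs_le.1 (hC C)).1]
  obtain ⟨a, -, ha⟩ := intermediate_value_Icc (by linarith) hg.continuousOn ⟨hneg, hpos⟩
  exact ⟨a, ha⟩

namespace D1

variable {h : ℝ} {hh : 0 < h}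

noncomputable def affine (b a : ℝ) : D1 h hh :=
  ⟨(⟨fun t => b * t + a, by fun_prop⟩, ContinuousMap.const _ b), fun t => by
    refine (((hasDerivWithinAt_id (t : ℝ) _).const_mul b).add_const a).congr_of_mem
      (fun s hs => ?_) t.2 |>.congr_deriv (mul_one b)
    simp [projIcc_of_mem (by linarith) hs]⟩

@[simp]
theorem affine_fst_apply (b a : ℝ) (t : Icc (-h) 0) :
    ((affine b a : D1 h hh) : C(Icc (-h) 0, ℝ) × C(Icc (-h) 0, ℝ)).1 t = b * t + a :=
  rfl

@[simp]
theorem affine_snd_apply (b a : ℝ) (t : Icc (-h) 0) :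
    ((affine b a : D1 h hh) : C(Icc (-h) 0, ℝ) × C(Icc (-h) 0, ℝ)).2 t = b :=
  rfl

theorem continuous_affine (b : ℝ) : Continuous (affine b : ℝ → D1 h hh) := by
  have hsplit : (affine b : ℝ → D1 h hh) = fun a => affine b 0 + a • affine 0 1 := by
    funext a
    ext t <;> simp
  rw [hsplit]
  fun_prop

end D1

/-- If `f : ℝ → ℝ` is continuous and `d : C¹([-h,0],ℝ) → (-h,0)` is continuous, then there is
`φ ∈ C¹` with `φ'(0) = f(φ(d(φ)))`; i.e. the solution manifold of `F(φ) = f(φ(d(φ)))` is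
nonempty. -/
theorem stmt2 (h : ℝ) (hh : 0 < h) (f : ℝ → ℝ)
    (d : D1 h hh → ℝ) (hd : Continuous d) (hdr : ∀ φ, d φ ∈ Ioo (-h) 0) :
    ∃ φ : D1 h hh,
      (φ : C(Icc (-h) 0, ℝ) × C(Icc (-h) 0, ℝ)).2 (projIcc (-h) 0 (by linarith) 0)
        = f ((φ : C(Icc (-h) 0, ℝ) × C(Icc (-h) 0, ℝ)).1 (projIcc (-h) 0 (by linarith) (d φ))) := by
  set b := f 0
  have hperturb : ∀ a, |(a + b * d (D1.affine b a)) - a| ≤ |b| * h := fun a => by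
    obtain ⟨hlo, hhi⟩ := hdr (D1.affine b a)
    rw [add_sub_cancel_left, abs_mul]
    exact mul_le_mul_of_nonneg_left (abs_le.2 ⟨by linarith, by linarith⟩) (abs_nonneg b)
  obtain ⟨a, ha⟩ := exists_eq_zero_of_abs_sub_le (g := fun a => a + b * d (D1.affine b a))
    (continuous_id.add (continuous_const.mul (hd.comp (D1.continuous_affine b)))) hperturb
  refine ⟨D1.affine b a, ?_⟩
  rw [projIcc_of_mem _ (Ioo_subset_Icc_self (hdr _))]
  simp only [D1.affine_fst_apply, D1.affine_snd_apply]
  rw [add_comm, ha]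
end

section
/- Let h > 0, b > 0, s ∈ (-h, 0). Let f : ℝ → ℝ be injective and let v : ℝ → ℝ, δ : ℝ → (-h,0) be continuously differentiable with lim_{y→∞} v(y) = ∞ and lim_{w→∞} δ(w) = 0. Define d(φ) = δ(∫_{-h}^0 v(φ(t)) dt) and F(φ) = f(φ(d(φ))) on C¹([-h,0],ℝ). Then there exist φ, ψ in U_b = {φ ∈ C¹ : |φ'(t)| < b on [-h, d(φ)]} with φ(t) = ψ(t) for all t ∈ [-h, s] but F(φ) ≠ F(ψ). -/
open Set Filter

/-!
Take `φ ≡ c` and `ψ = c + g`, where `g` is a small `C¹` bump vanishing on `(-∞, s]` and positive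
on `(s, ∞)`. Since `v → ∞`, choosing `c` large makes `∫ v ∘ ψ` large, so that `d ψ` is close to
`0` and in particular `d ψ > s`. Then `ψ (d ψ) > c = φ (d φ)`, and injectivity of `f` separates
`F φ` from `F ψ`.
-/

lemma exists_contDiff_eq_zero_of_le_pos_of_lt_abs_deriv_lt {K : Set ℝ} (hK : IsCompact K)
    (s : ℝ) {b : ℝ} (hb : 0 < b) :
    ∃ g : ℝ → ℝ, ContDiff ℝ 1 g ∧ (∀ t ≤ s, g t = 0) ∧ (∀ t, s < t → 0 < g t) ∧
      ∀ t ∈ K, |deriv g t| < b := by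
  have hG : ContDiff ℝ 1 expNegInvGlue := expNegInvGlue.contDiff
  obtain ⟨C, hC⟩ := hK.exists_bound_of_continuousOn
    ((hG.continuous_deriv le_rfl).comp (continuous_sub_right s)).continuousOn
  set η := b / (|C| + 1)
  have hη : 0 < η := by positivity
  refine ⟨fun t => η * expNegInvGlue (t - s),
    contDiff_const.mul (hG.comp (contDiff_id.sub contDiff_const)),
    fun t ht => ?_, fun t ht => ?_, fun t ht => ?_⟩
  · simp [expNegInvGlue.zero_of_nonpos (sub_nonpos.2 ht)]
  · exact mul_pos hη (expNegInvGlue.pos_of_pos (sub_pos.2 ht))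
  · rw [deriv_const_mul_field, deriv_comp_sub_const, abs_mul, abs_of_pos hη]
    calc η * |deriv expNegInvGlue (t - s)| ≤ η * |C| :=
          mul_le_mul_of_nonneg_left ((hC t ht).trans (le_abs_self C)) hη.le
      _ < η * (|C| + 1) := by gcongr; linarith
      _ = b := div_mul_cancel₀ _ (by positivity)

lemma exists_le_intervalIntegral_comp_of_tendsto_atTop {v : ℝ → ℝ} (hv : Continuous v)
    (hvlim : Tendsto v atTop atTop) {a b : ℝ} (hab : a < b) (W : ℝ) :
    ∃ c, ∀ ψ : ℝ → ℝ, Continuous ψ → (∀ t ∈ Icc a b, c ≤ ψ t) →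
      W ≤ ∫ t in a..b, v (ψ t) := by
  obtain ⟨c, hc⟩ := eventually_atTop.mp (hvlim.eventually_ge_atTop (W / (b - a)))
  refine ⟨c, fun ψ hψ hcψ => ?_⟩
  calc W = ∫ _ in a..b, W / (b - a) := by
        rw [intervalIntegral.integral_const, smul_eq_mul]
        field_simp [sub_ne_zero.2 hab.ne']
    _ ≤ ∫ t in a..b, v (ψ t) :=
        intervalIntegral.integral_mono_on hab.le intervalIntegrable_const
          ((hv.comp hψ).intervalIntegrable a b) fun t ht => hc _ (hcψ t ht)

theorem stmt15_general (h b s : ℝ) (hb : 0 < b) (hs : s ∈ Set.Ioo (-h) 0)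
    (f v δ : ℝ → ℝ) (hf : Function.Injective f)
    (hv : ContDiff ℝ 1 v) (hδr : ∀ w, δ w ∈ Set.Ioo (-h) 0)
    (hvlim : Filter.Tendsto v Filter.atTop Filter.atTop)
    (hδlim : Filter.Tendsto δ Filter.atTop (nhds 0))
    (d : (ℝ → ℝ) → ℝ) (hd : ∀ φ, d φ = δ (∫ t in (-h)..0, v (φ t)))
    (F : (ℝ → ℝ) → ℝ) (hF : ∀ φ, F φ = f (φ (d φ)))
    (U : Set (ℝ → ℝ))
    (hU : U = {φ | ContDiff ℝ 1 φ ∧ ∀ t ∈ Set.Icc (-h) (d φ), |deriv φ t| < b}) :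
    ∃ φ ψ, φ ∈ U ∧ ψ ∈ U ∧ (∀ t ∈ Set.Icc (-h) s, φ t = ψ t) ∧ F φ ≠ F ψ := by
  obtain ⟨g, hgC, hg_le, hg_pos, hg'⟩ :=
    exists_contDiff_eq_zero_of_le_pos_of_lt_abs_deriv_lt (isCompact_Icc (a := -h) (b := 0)) s hb
  have hg_nonneg : ∀ t, 0 ≤ g t := fun t =>
    (le_or_gt t s).elim (fun ht => (hg_le t ht).ge) fun ht => (hg_pos t ht).le
  obtain ⟨W, hW⟩ := eventually_atTop.mp (hδlim.eventually (eventually_gt_nhds hs.2))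
  obtain ⟨c, hc⟩ :=
    exists_le_intervalIntegral_comp_of_tendsto_atTop hv.continuous hvlim (hs.1.trans hs.2) W
  have hdψ : d (fun t => c + g t) ∈ Ioo s 0 := by
    rw [hd]
    exact ⟨hW _ (hc _ (continuous_const.add hgC.continuous) fun t _ =>
      le_add_of_nonneg_right (hg_nonneg t)), (hδr _).2⟩
  refine ⟨fun _ => c, fun t => c + g t, ?_, ?_, fun t ht => ?_, ?_⟩
  · rw [hU]
    exact ⟨contDiff_const, fun t _ => by simpa using hb⟩
  · rw [hU]
    refine ⟨contDiff_const.add hgC, fun t ht => ?_⟩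
    rw [deriv_const_add]
    exact hg' t ⟨ht.1, ht.2.trans hdψ.2.le⟩
  · simp [hg_le t ht.2]
  · rw [hF, hF]
    intro hEq
    linarith [hf hEq, hg_pos _ hdψ.1]

/-- Let `b > 0`, `s ∈ (-h,0)`, `f` injective, and `v, δ` continuously differentiable with
`v(y) → ∞` as `y → ∞` and `δ(w) → 0` as `w → ∞`, `δ` taking values in `(-h,0)`. With
`d(φ) = δ(∫_{-h}^0 v(φ(t)) dt)` and `F(φ) = f(φ(d(φ)))`, there exist `φ, ψ` in
`U_b = {φ ∈ C¹ : |φ'(t)| < b on [-h, d(φ)]}` with `φ = ψ` on `[-h,s]` but `F(φ) ≠ F(ψ)`. -/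
theorem stmt15 (h b s : ℝ) (hh : 0 < h) (hb : 0 < b) (hs : s ∈ Set.Ioo (-h) 0)
    (f v δ : ℝ → ℝ) (hf : Function.Injective f)
    (hv : ContDiff ℝ 1 v) (hδ : ContDiff ℝ 1 δ) (hδr : ∀ w, δ w ∈ Set.Ioo (-h) 0)
    (hvlim : Filter.Tendsto v Filter.atTop Filter.atTop)
    (hδlim : Filter.Tendsto δ Filter.atTop (nhds 0))
    (d : (ℝ → ℝ) → ℝ) (hd : ∀ φ, d φ = δ (∫ t in (-h)..0, v (φ t)))
    (F : (ℝ → ℝ) → ℝ) (hF : ∀ φ, F φ = f (φ (d φ)))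
    (U : Set (ℝ → ℝ))
    (hU : U = {φ | ContDiff ℝ 1 φ ∧ ∀ t ∈ Set.Icc (-h) (d φ), |deriv φ t| < b}) :
    ∃ φ ψ, φ ∈ U ∧ ψ ∈ U ∧ (∀ t ∈ Set.Icc (-h) s, φ t = ψ t) ∧ F φ ≠ F ψ :=
  stmt15_general h b s hb hs f v δ hf hv hδr hvlim hδlim d hd F hF U hU
end
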